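/- (Theorem 1: optimality of a threshold policy) Let V : [0,1] → ℝ be bounded and convex, with x ↦ V(Γ_x(b)) W_b(x) μ-integrable for every b, and suppose V satisfies the Bellman equation V(b) = max{ λ b + β ∫_X V(Γ_x(b)) W_b(x) dμ(x), λ − c + β V(1−p) } for all b ∈ [0,1]. Then there exists b* ∈ ℝ such that the set I = { b ∈ [0,1] : λ − c + β V(1−p) ≥ λ b + β ∫_X V(Γ_x(b)) W_b(x) dμ(x) } of belief states at which the repair action is optimal satisfies I = [0, b*] ∩ [0,1] (in particular I is empty when b* < 0, and 0 ∈ I whenever I is nonempty). -/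

import Mathlib

open MeasureTheory

/-- Unnormalized observation probability `W_b(x) = Q1(x) b + Q0(x)(1-b)`. -/
noncomputable def Wf {X : Type*} (Q0 Q1 : X → ℝ) (b : ℝ) (x : X) : ℝ :=
  Q1 x * b + Q0 x * (1 - b)

/-- Do-nothing belief update `Γ_x(b) = (1-p) Q1(x) b / W_b(x)`; since in `ℝ`
division by zero yields `0`, this automatically satisfies the convention
`Γ_x(b) = 0` when `W_b(x) = 0`. -/
noncomputable def Gf {X : Type*} (p : ℝ) (Q0 Q1 : X → ℝ) (x : X) (b : ℝ) : ℝ :=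
  (1 - p) * Q1 x * b / Wf Q0 Q1 b x

/-!
The expected continuation value `b ↦ ∫ V(Γ_x(b)) W_b(x) dμ(x)` is convex: for each `x`,
`V(Γ_x(b)) W_b(x) = w V(u / w)` is the perspective of the convex function `V`, evaluated at
`u = (1-p) Q1(x) b` and `w = W_b(x)`, which are affine in `b`. Hence the repair set is a
sublevel set of a convex function, i.e. an interval. The Bellman equation forces it to contain
`0` as soon as it is nonempty, and to lie below `(1-β) K / λ < 1`, where `K` is the value of
repairing; in the interior of `[0,1]` the convex function is continuous, so the interval is
closed.
-/

open Set

theorem ConvexOn.perspective_add_le {E : Type*} [AddCommGroup E] [Module ℝ E] {s : Set E}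
    {f : E → ℝ} (hf : ConvexOn ℝ s f) {x₁ x₂ : E} {w₁ w₂ a b : ℝ}
    (hw₁ : 0 ≤ w₁) (hw₂ : 0 ≤ w₂) (hx₁ : w₁⁻¹ • x₁ ∈ s) (hx₂ : w₂⁻¹ • x₂ ∈ s)
    (h₁ : w₁ = 0 → x₁ = 0) (h₂ : w₂ = 0 → x₂ = 0) (ha : 0 ≤ a) (hb : 0 ≤ b) :
    (a * w₁ + b * w₂) * f ((a * w₁ + b * w₂)⁻¹ • (a • x₁ + b • x₂)) ≤
      a * (w₁ * f (w₁⁻¹ • x₁)) + b * (w₂ * f (w₂⁻¹ • x₂)) := by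
  have hcancel : ∀ {w : ℝ} {x : E}, (w = 0 → x = 0) → w • w⁻¹ • x = x := fun {w x} h => by
    rcases eq_or_ne w 0 with rfl | hw
    · simp [h rfl]
    · exact smul_inv_smul₀ hw x
  set w := a * w₁ + b * w₂
  have hw₁' : 0 ≤ a * w₁ := mul_nonneg ha hw₁
  have hw₂' : 0 ≤ b * w₂ := mul_nonneg hb hw₂
  rcases (add_nonneg hw₁' hw₂').eq_or_lt with hw | hw
  · have e₁ : a * w₁ = 0 := by linarith
    have e₂ : b * w₂ = 0 := by linarith
    have hw0 : w = 0 := hw.symm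
    rw [hw0, ← mul_assoc, ← mul_assoc, e₁, e₂]
    simp
  replace hw : 0 < w := hw
  have hcomb : (a * w₁ / w) • w₁⁻¹ • x₁ + (b * w₂ / w) • w₂⁻¹ • x₂ = w⁻¹ • (a • x₁ + b • x₂) := by
    simp only [div_eq_inv_mul, mul_smul, hcancel h₁, hcancel h₂, smul_add]
  have hconv := hf.2 hx₁ hx₂ (div_nonneg hw₁' hw.le) (div_nonneg hw₂' hw.le)
    (by rw [← add_div, div_self hw.ne'])
  rw [hcomb, smul_eq_mul, smul_eq_mul] at hconv
  calc w * f (w⁻¹ • (a • x₁ + b • x₂))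
      ≤ w * (a * w₁ / w * f (w₁⁻¹ • x₁) + b * w₂ / w * f (w₂⁻¹ • x₂)) :=
        mul_le_mul_of_nonneg_left hconv hw.le
    _ = a * (w₁ * f (w₁⁻¹ • x₁)) + b * (w₂ * f (w₂⁻¹ • x₂)) := by
        field_simp

theorem ConvexOn.exists_sublevel_eq_Icc {g : ℝ → ℝ} {a b B K : ℝ} (hg : ConvexOn ℝ (Icc a b) g)
    (hab : a ≤ b) (ha : g a ≤ K) (hB : B < b) (hle : ∀ x ∈ Icc a b, g x ≤ K → x ≤ B) :
    ∃ m, {x ∈ Icc a b | g x ≤ K} = Icc a m := by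
  set S := {x ∈ Icc a b | g x ≤ K}
  have haS : a ∈ S := ⟨⟨le_rfl, hab⟩, ha⟩
  have hbdd : BddAbove S := ⟨B, fun x hx => hle x hx.1 hx.2⟩
  have hconn : S.OrdConnected := convex_iff_ordConnected.1 (hg.convex_le K)
  set m := sSup S
  have hmB : m ≤ B := csSup_le ⟨a, haS⟩ fun x hx => hle x hx.1 hx.2
  have hmS : m ∈ S := by
    rcases (le_csSup hbdd haS).eq_or_lt with ham | ham
    · have hma : m = a := ham.symm
      rwa [hma]
    have hint : m ∈ interior (Icc a b) := by rw [interior_Icc]; exact ⟨ham, hmB.trans_lt hB⟩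
    have hcont : ContinuousAt g m :=
      (hg.continuousOn_interior m hint).continuousAt (isOpen_interior.mem_nhds hint)
    refine ⟨⟨ham.le, hmB.trans hB.le⟩,
      le_of_tendsto (hcont.tendsto.mono_left (nhdsWithin_le_nhds (s := Iio m))) ?_⟩
    filter_upwards [Ioo_mem_nhdsLT ham] with x hx
    obtain ⟨s, hs, hxs⟩ := exists_lt_of_lt_csSup ⟨a, haS⟩ hx.2
    exact (hconn.out haS hs ⟨hx.1.le, hxs.le⟩).2
  exact ⟨m, Subset.antisymm (fun x hx => ⟨hx.1.1, le_csSup hbdd hx⟩) (hconn.out haS hmS)⟩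

section Observation

variable {X : Type*} {p b : ℝ} {Q0 Q1 : X → ℝ} {x : X}

theorem Wf_nonneg (hQ0 : 0 ≤ Q0 x) (hQ1 : 0 ≤ Q1 x) (hb : b ∈ Icc (0 : ℝ) 1) :
    0 ≤ Wf Q0 Q1 b x :=
  add_nonneg (mul_nonneg hQ1 hb.1) (mul_nonneg hQ0 (sub_nonneg.2 hb.2))

theorem Wf_mul_add_mul {a b' s t : ℝ} (hst : s + t = 1) :
    Wf Q0 Q1 (s * a + t * b') x = s * Wf Q0 Q1 a x + t * Wf Q0 Q1 b' x := by
  simp only [Wf]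
  linear_combination (-Q0 x) * hst

theorem mul_eq_zero_of_Wf_eq_zero (hQ0 : 0 ≤ Q0 x) (hQ1 : 0 ≤ Q1 x) (hb : b ∈ Icc (0 : ℝ) 1)
    (hW : Wf Q0 Q1 b x = 0) : Q1 x * b = 0 := by
  have h₁ := mul_nonneg hQ1 hb.1
  have h₀ := mul_nonneg hQ0 (sub_nonneg.2 hb.2)
  simp only [Wf] at hW
  linarith

theorem Gf_mem_Icc (hp : p ∈ Icc (0 : ℝ) 1) (hQ0 : 0 ≤ Q0 x) (hQ1 : 0 ≤ Q1 x)
    (hb : b ∈ Icc (0 : ℝ) 1) : Gf p Q0 Q1 x b ∈ Icc (0 : ℝ) 1 := by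
  rcases (Wf_nonneg hQ0 hQ1 hb).eq_or_lt with hW | hW
  · simp [Gf, ← hW]
  have hQ1b := mul_nonneg hQ1 hb.1
  refine ⟨div_nonneg ?_ hW.le, (div_le_one hW).2 ?_⟩
  · rw [mul_assoc]; exact mul_nonneg (sub_nonneg.2 hp.2) hQ1b
  · have := mul_nonneg hQ0 (sub_nonneg.2 hb.2)
    simp only [Wf]
    nlinarith [mul_nonneg hp.1 hQ1b]

theorem convexOn_comp_Gf_mul_Wf {V : ℝ → ℝ} (hV : ConvexOn ℝ (Icc 0 1) V)
    (hp : p ∈ Icc (0 : ℝ) 1) (hQ0 : 0 ≤ Q0 x) (hQ1 : 0 ≤ Q1 x) :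
    ConvexOn ℝ (Icc 0 1) (fun b => V (Gf p Q0 Q1 x b) * Wf Q0 Q1 b x) := by
  have hG : ∀ b, Gf p Q0 Q1 x b = (Wf Q0 Q1 b x)⁻¹ • ((1 - p) * Q1 x * b) := fun b => by
    rw [Gf, smul_eq_mul, div_eq_inv_mul]
  have hzero : ∀ {b}, b ∈ Icc (0 : ℝ) 1 → Wf Q0 Q1 b x = 0 → (1 - p) * Q1 x * b = 0 :=
    fun hb hW => by rw [mul_assoc, mul_eq_zero_of_Wf_eq_zero hQ0 hQ1 hb hW, mul_zero]
  refine ⟨convex_Icc 0 1, fun a ha b hb s t hs ht hst => ?_⟩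
  have key := hV.perspective_add_le (Wf_nonneg hQ0 hQ1 ha) (Wf_nonneg hQ0 hQ1 hb)
    (hG a ▸ Gf_mem_Icc hp hQ0 hQ1 ha) (hG b ▸ Gf_mem_Icc hp hQ0 hQ1 hb) (hzero ha) (hzero hb) hs ht
  have hnum : s • ((1 - p) * Q1 x * a) + t • ((1 - p) * Q1 x * b) =
      (1 - p) * Q1 x * (s * a + t * b) := by
    simp only [smul_eq_mul]; ring
  rw [← Wf_mul_add_mul hst, hnum, ← hG, ← hG, ← hG] at key
  simp only [smul_eq_mul]
  linarith

theorem integral_Wf [MeasurableSpace X] {μ : Measure X} (hQ0 : ∫ x, Q0 x ∂μ = 1)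
    (hQ1 : ∫ x, Q1 x ∂μ = 1) (b : ℝ) : ∫ x, Wf Q0 Q1 b x ∂μ = 1 := by
  have hi0 : Integrable Q0 μ := .of_integral_ne_zero (by rw [hQ0]; exact one_ne_zero)
  have hi1 : Integrable Q1 μ := .of_integral_ne_zero (by rw [hQ1]; exact one_ne_zero)
  simp only [Wf]
  rw [integral_add (hi1.mul_const b) (hi0.mul_const _), integral_mul_const, integral_mul_const,
    hQ0, hQ1]
  ring

theorem integral_comp_Gf_zero_mul_Wf [MeasurableSpace X] {μ : Measure X}
    (hQ0 : ∫ x, Q0 x ∂μ = 1) (V : ℝ → ℝ) :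
    ∫ x, V (Gf p Q0 Q1 x 0) * Wf Q0 Q1 0 x ∂μ = V 0 := by
  simp [Gf, Wf, integral_const_mul, hQ0]

theorem integral_comp_Gf_one_mul_Wf [MeasurableSpace X] {μ : Measure X}
    (hQ1 : ∫ x, Q1 x ∂μ = 1) (V : ℝ → ℝ) :
    ∫ x, V (Gf p Q0 Q1 x 1) * Wf Q0 Q1 1 x ∂μ = V (1 - p) := by
  have hpt : ∀ x, V (Gf p Q0 Q1 x 1) * Wf Q0 Q1 1 x = V (1 - p) * Q1 x := fun x => by
    rcases eq_or_ne (Q1 x) 0 with h | h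
    · simp [Wf, h]
    · simp [Gf, Wf, h]
  simp only [hpt, integral_const_mul, hQ1, mul_one]

theorem le_integral_comp_Gf_mul_Wf [MeasurableSpace X] {μ : Measure X} {V : ℝ → ℝ} {K : ℝ}
    (hp : p ∈ Icc (0 : ℝ) 1) (hQ0nn : ∀ x, 0 ≤ Q0 x) (hQ1nn : ∀ x, 0 ≤ Q1 x)
    (hQ0 : ∫ x, Q0 x ∂μ = 1) (hQ1 : ∫ x, Q1 x ∂μ = 1) (hVK : ∀ t ∈ Icc (0 : ℝ) 1, K ≤ V t)
    (hb : b ∈ Icc (0 : ℝ) 1) (hint : Integrable (fun x => V (Gf p Q0 Q1 x b) * Wf Q0 Q1 b x) μ) :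
    K ≤ ∫ x, V (Gf p Q0 Q1 x b) * Wf Q0 Q1 b x ∂μ := by
  have hWint : Integrable (fun x => Wf Q0 Q1 b x) μ :=
    .of_integral_ne_zero (by rw [integral_Wf hQ0 hQ1]; exact one_ne_zero)
  calc K = ∫ x, K * Wf Q0 Q1 b x ∂μ := by rw [integral_const_mul, integral_Wf hQ0 hQ1, mul_one]
    _ ≤ _ := integral_mono (hWint.const_mul K) hint fun x =>
        mul_le_mul_of_nonneg_right (hVK _ (Gf_mem_Icc hp (hQ0nn x) (hQ1nn x) hb))
          (Wf_nonneg (hQ0nn x) (hQ1nn x) hb)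

end Observation

theorem exists_sublevel_eq_Icc_of_bellman {F V : ℝ → ℝ} {p lam c β : ℝ}
    (hp : p ∈ Icc (0 : ℝ) 1) (hlam : 0 < lam) (hc : 0 < c) (hβ : β ∈ Ioo (0 : ℝ) 1)
    (hconv : ConvexOn ℝ (Icc 0 1) fun b => lam * b + β * F b)
    (hBellman : ∀ b ∈ Icc (0 : ℝ) 1, V b = max (lam * b + β * F b) (lam - c + β * V (1 - p)))
    (hFK : ∀ b ∈ Icc (0 : ℝ) 1, lam - c + β * V (1 - p) ≤ F b)
    (hF0 : F 0 = V 0) (hF1 : F 1 = V (1 - p)) :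
    ∃ m : ℝ, {b ∈ Icc (0 : ℝ) 1 | lam - c + β * V (1 - p) ≥ lam * b + β * F b} =
      Icc 0 m ∩ Icc 0 1 := by
  set K := lam - c + β * V (1 - p)
  obtain ⟨hβ0, hβ1⟩ := hβ
  by_cases hS : ∃ s ∈ Icc (0 : ℝ) 1, lam * s + β * F s ≤ K
  swap
  · push Not at hS
    refine ⟨-1, ?_⟩
    rw [Icc_eq_empty (show ¬(0 : ℝ) ≤ -1 by norm_num), empty_inter, eq_empty_iff_forall_notMem]
    exact fun b hb => (hS b hb.1).not_ge hb.2
  obtain ⟨s, hs, hsK⟩ := hS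
  have hK0 : 0 ≤ K := by nlinarith [hFK s hs, hs.1]
  -- Otherwise the Bellman equation at `0` reads `V 0 = β * V 0`, so `V 0 = 0 ≤ K`.
  have h0 : lam * 0 + β * F 0 ≤ K := by
    by_contra! h
    have hV0 := hBellman 0 ⟨le_rfl, zero_le_one⟩
    rw [max_eq_left h.le, hF0] at hV0
    rw [hF0] at h
    nlinarith
  have hV1p : V (1 - p) ≤ K + c := by
    rw [hBellman (1 - p) ⟨by linarith [hp.2], by linarith [hp.1]⟩]
    refine max_le ?_ (by linarith)
    calc _ ≤ max (lam * 0 + β * F 0) (lam * 1 + β * F 1) :=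
          hconv.le_max_of_mem_Icc ⟨le_rfl, zero_le_one⟩ ⟨zero_le_one, le_rfl⟩
            ⟨by linarith [hp.2], by linarith [hp.1]⟩
      _ ≤ K + c := max_le (by linarith) (by rw [hF1]; linarith)
  have hB : (1 - β) * K / lam < 1 := by
    rw [div_lt_one hlam]
    nlinarith [mul_le_mul_of_nonneg_left hV1p hβ0.le]
  have hle : ∀ b ∈ Icc (0 : ℝ) 1, lam * b + β * F b ≤ K → b ≤ (1 - β) * K / lam :=
    fun b hb hbK => by
      rw [le_div_iff₀ hlam]
      nlinarith [mul_le_mul_of_nonneg_left (hFK b hb) hβ0.le]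
  obtain ⟨m, hm⟩ := hconv.exists_sublevel_eq_Icc zero_le_one h0 hB hle
  refine ⟨m, ?_⟩
  change {b ∈ Icc (0 : ℝ) 1 | lam * b + β * F b ≤ K} = _
  rw [hm, inter_eq_left.2 (hm ▸ sep_subset _ _)]

theorem adr_threshold_policy_optimal_general
    {X : Type*} [MeasurableSpace X] (μ : Measure X)
    (p lam c β : ℝ)
    (hp : p ∈ Set.Icc (0 : ℝ) 1) (hlam : 0 < lam) (hc : 0 < c)
    (hβ : β ∈ Set.Ioo (0 : ℝ) 1)
    (Q0 Q1 : X → ℝ)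
    (hQ0nn : ∀ x, 0 ≤ Q0 x) (hQ1nn : ∀ x, 0 ≤ Q1 x)
    (hQ0int : ∫ x, Q0 x ∂μ = 1) (hQ1int : ∫ x, Q1 x ∂μ = 1)
    (V : ℝ → ℝ)
    (hVconv : ConvexOn ℝ (Set.Icc (0 : ℝ) 1) V)
    (hVint : ∀ b ∈ Set.Icc (0 : ℝ) 1,
      Integrable (fun x => V (Gf p Q0 Q1 x b) * Wf Q0 Q1 b x) μ)
    (hBellman : ∀ b ∈ Set.Icc (0 : ℝ) 1,
      V b = max (lam * b + β * ∫ x, V (Gf p Q0 Q1 x b) * Wf Q0 Q1 b x ∂μ)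
                (lam - c + β * V (1 - p))) :
    ∃ bstar : ℝ,
      {b ∈ Set.Icc (0 : ℝ) 1 |
          lam - c + β * V (1 - p) ≥
            lam * b + β * ∫ x, V (Gf p Q0 Q1 x b) * Wf Q0 Q1 b x ∂μ} =
        Set.Icc 0 bstar ∩ Set.Icc (0 : ℝ) 1 := by
  have hF : ConvexOn ℝ (Icc 0 1) fun b => ∫ x, V (Gf p Q0 Q1 x b) * Wf Q0 Q1 b x ∂μ :=
    integral_convexOn_of_integrand_ae (convex_Icc 0 1)
      (ae_of_all _ fun x => convexOn_comp_Gf_mul_Wf hVconv hp (hQ0nn x) (hQ1nn x)) hVint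
  have hVK : ∀ t ∈ Icc (0 : ℝ) 1, lam - c + β * V (1 - p) ≤ V t := fun t ht =>
    (hBellman t ht).symm ▸ le_max_right _ _
  exact exists_sublevel_eq_Icc_of_bellman hp hlam hc hβ
    (((convexOn_id (convex_Icc 0 1)).smul hlam.le).add (hF.smul hβ.1.le)) hBellman
    (fun b hb => le_integral_comp_Gf_mul_Wf hp hQ0nn hQ1nn hQ0int hQ1int hVK hb (hVint b hb))
    (integral_comp_Gf_zero_mul_Wf hQ0int V) (integral_comp_Gf_one_mul_Wf hQ1int V)

/-- **Theorem 1: optimality of a threshold policy.**  Let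
`V : [0,1] → ℝ` be bounded and convex, with `x ↦ V(Γ_x(b)) W_b(x)`
μ-integrable for every `b`, satisfying the Bellman equation
`V(b) = max{ λ b + β ∫ V(Γ_x(b)) W_b(x) dμ(x), λ − c + β V(1−p) }` on `[0,1]`.
Then there exists `b* ∈ ℝ` such that the set
`I = { b ∈ [0,1] : λ − c + β V(1−p) ≥ λ b + β ∫ V(Γ_x(b)) W_b(x) dμ(x) }`
of belief states at which the repair action is optimal equals
`[0, b*] ∩ [0,1]` (in particular `I = ∅` when `b* < 0`, and `0 ∈ I` whenever
`I` is nonempty). -/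
theorem adr_threshold_policy_optimal
    {X : Type*} [MeasurableSpace X] (μ : Measure X) [SigmaFinite μ]
    (p lam c β : ℝ)
    (hp : p ∈ Set.Icc (0 : ℝ) 1) (hlam : 0 < lam) (hc : 0 < c)
    (hβ : β ∈ Set.Ioo (0 : ℝ) 1)
    (Q0 Q1 : X → ℝ)
    (hQ0meas : Measurable Q0) (hQ1meas : Measurable Q1)
    (hQ0nn : ∀ x, 0 ≤ Q0 x) (hQ1nn : ∀ x, 0 ≤ Q1 x)
    (hQ0int : ∫ x, Q0 x ∂μ = 1) (hQ1int : ∫ x, Q1 x ∂μ = 1)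
    (V : ℝ → ℝ)
    (hVbdd : ∃ C, ∀ b ∈ Set.Icc (0 : ℝ) 1, |V b| ≤ C)
    (hVconv : ConvexOn ℝ (Set.Icc (0 : ℝ) 1) V)
    (hVint : ∀ b ∈ Set.Icc (0 : ℝ) 1,
      Integrable (fun x => V (Gf p Q0 Q1 x b) * Wf Q0 Q1 b x) μ)
    (hBellman : ∀ b ∈ Set.Icc (0 : ℝ) 1,
      V b = max (lam * b + β * ∫ x, V (Gf p Q0 Q1 x b) * Wf Q0 Q1 b x ∂μ)
                (lam - c + β * V (1 - p))) :
    ∃ bstar : ℝ,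
      {b ∈ Set.Icc (0 : ℝ) 1 |
          lam - c + β * V (1 - p) ≥
            lam * b + β * ∫ x, V (Gf p Q0 Q1 x b) * Wf Q0 Q1 b x ∂μ} =
        Set.Icc 0 bstar ∩ Set.Icc (0 : ℝ) 1 :=
  adr_threshold_policy_optimal_general μ p lam c β hp hlam hc hβ Q0 Q1 hQ0nn hQ1nn hQ0int hQ1int V
    hVconv hVint hBellman
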